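/- arXiv:2311.04337 — 2 statements merged into one kernel-verified Lean document; each statement's English description precedes it below -/
import Mathlib

section
/- Let G=(V,E) be an undirected graph admitting a nowhere-zero circular k-flow (k ≥ 2 rational), let G⃗=(V,E⁺∪E⁻) be the bidirected version of G, and let w ∈ ℤ^{E⁺∪E⁻} be a nowhere-zero τ-SCD, i.e., w_e ≥ 1 for all arcs e and w(δ⁺(U)) ≥ τ for all nonempty proper U⊆V. Then there exists an integral x with 0 ≤ x ≤ w such that both x and w−x satisfy x(δ⁺(U)) ≥ ⌊τ/(k+1)⌋ and (w−x)(δ⁺(U)) ≥ ⌊τ/(k+1)⌋ for all nonempty proper U⊆V. -/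
open Finset

variable {V E : Type*} [Fintype V] [DecidableEq V] [Fintype E] [DecidableEq E]

/-- The arcs leaving the vertex set `U` (generic in the arc type). -/
def outArcs {A : Type*} [Fintype A] (src tgt : A → V) (U : Finset V) : Finset A :=
  univ.filter fun a => src a ∈ U ∧ tgt a ∉ U

/-- Source of an arc of the bidirected graph `E × Bool`: `(e, true) = e⁺` goes from `s e` to
`t e`, and `(e, false) = e⁻` goes from `t e` to `s e`. -/
def bsrc (s t : E → V) (p : E × Bool) : V := if p.2 then s p.1 else t p.1

/-- Target of an arc of the bidirected graph `E × Bool`. -/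
def btgt (s t : E → V) (p : E × Bool) : V := if p.2 then t p.1 else s p.1

/-- A strongly connected orientation of the graph with edges `E` and endpoints `s`, `t`:
a choice `O` of one direction per edge such that every nonempty proper cut has a leaving arc. -/
def IsSCO (s t : E → V) (O : E → Bool) : Prop :=
  ∀ U : Finset V, U.Nonempty → U ≠ univ →
    ∃ e : E, (e, O e) ∈ outArcs (bsrc s t) (btgt s t) U

/-- Tail of an edge under the orientation `o`. -/
def otail (s t : E → V) (o : E → Bool) (e : E) : V := if o e then s e else t e

/-- Head of an edge under the orientation `o`. -/
def ohead (s t : E → V) (o : E → Bool) (e : E) : V := if o e then t e else s e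

/-- The graph admits a nowhere-zero circular `k`-flow: an orientation together with a
circulation taking values in `[1, k-1]`. -/
def HasNZCircularFlow (s t : E → V) (k : ℚ) : Prop :=
  ∃ (o : E → Bool) (f : E → ℚ),
    (∀ v : V, ∑ e ∈ univ.filter (fun e => otail s t o e = v), f e
            = ∑ e ∈ univ.filter (fun e => ohead s t o e = v), f e) ∧
    ∀ e : E, 1 ≤ f e ∧ f e ≤ k - 1

/-!
Orient `G` along a nowhere-zero circular `k`-flow and put `⌈w/2⌉` on the arcs of this
orientation, `⌊w/2⌋` on the reversed ones. Flow conservation across a cut `U` bounds the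
number of forward edges by `k - 1` times the number of backward edges and vice versa. An arc
leaving `U` along the orientation carries at least `max 1 (w/2)`, one against it at least
`(w - 1)/2`; hence `(k+1) x(δ⁺U) ≥ (k-1)·#forward + w(δ⁺U) - #backward ≥ τ`.
The complement `w - x` is the same construction for the reversed orientation.
-/

section Cuts

variable {A : Type*} [Fintype A]

omit [Fintype V]

theorem sum_outArcs_eq_sum_outArcs_swap {M : Type*} [AddCancelCommMonoid M]
    (src tgt : A → V) (f : A → M)
    (hcons : ∀ v : V, ∑ a ∈ univ.filter (fun a => src a = v), f a
      = ∑ a ∈ univ.filter (fun a => tgt a = v), f a) (U : Finset V) :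
    ∑ a ∈ outArcs src tgt U, f a = ∑ a ∈ outArcs tgt src U, f a := by
  have hinside : ∑ a ∈ univ.filter (fun a => src a ∈ U), f a
      = ∑ a ∈ univ.filter (fun a => tgt a ∈ U), f a := by
    rw [← sum_fiberwise_eq_sum_filter, ← sum_fiberwise_eq_sum_filter]
    exact sum_congr rfl fun v _ => hcons v
  have hsplit : ∀ g g' : A → V, ∑ a ∈ univ.filter (fun a => g a ∈ U), f a
      = ∑ a ∈ univ.filter (fun a => g a ∈ U ∧ g' a ∈ U), f a + ∑ a ∈ outArcs g g' U, f a := by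
    intro g g'
    rw [← sum_filter_add_sum_filter_not _ (fun a => g' a ∈ U), filter_filter, filter_filter]
    rfl
  rw [hsplit src tgt, hsplit tgt src, filter_congr fun a _ => and_comm] at hinside
  exact add_left_cancel hinside

theorem card_outArcs_le_mul_card_outArcs_swap {R : Type*} [Ring R] [PartialOrder R]
    [IsOrderedAddMonoid R] (src tgt : A → V) (f : A → R) (c : R)
    (hcons : ∀ v : V, ∑ a ∈ univ.filter (fun a => src a = v), f a
      = ∑ a ∈ univ.filter (fun a => tgt a = v), f a)
    (hf : ∀ a, 1 ≤ f a ∧ f a ≤ c) (U : Finset V) :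
    (#(outArcs src tgt U) : R) ≤ #(outArcs tgt src U) * c := by
  calc (#(outArcs src tgt U) : R) = #(outArcs src tgt U) • (1 : R) := by simp
    _ ≤ ∑ a ∈ outArcs src tgt U, f a := card_nsmul_le_sum _ _ _ fun a _ => (hf a).1
    _ = ∑ a ∈ outArcs tgt src U, f a := sum_outArcs_eq_sum_outArcs_swap src tgt f hcons U
    _ ≤ #(outArcs tgt src U) • c := sum_le_card_nsmul _ _ _ fun a _ => (hf a).2
    _ = #(outArcs tgt src U) * c := nsmul_eq_mul _ _

end Cuts

omit [Fintype V] [DecidableEq V] [Fintype E] [DecidableEq E] in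
theorem otail_not (s t : E → V) (o : E → Bool) : otail s t (fun e => !o e) = ohead s t o := by
  funext e; cases h : o e <;> simp [otail, ohead, h]

omit [Fintype V] [DecidableEq V] [Fintype E] [DecidableEq E] in
theorem ohead_not (s t : E → V) (o : E → Bool) : ohead s t (fun e => !o e) = otail s t o := by
  funext e; cases h : o e <;> simp [otail, ohead, h]

omit [Fintype V] [DecidableEq E] in
theorem sum_outArcs_bidirected {M : Type*} [AddCommMonoid M] (s t : E → V) (o : E → Bool)
    (g : E × Bool → M) (U : Finset V) :
    ∑ p ∈ outArcs (bsrc s t) (btgt s t) U, g p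
      = ∑ e ∈ outArcs (otail s t o) (ohead s t o) U, g (e, o e)
        + ∑ e ∈ outArcs (ohead s t o) (otail s t o) U, g (e, !o e) := by
  simp only [outArcs, sum_filter, Fintype.sum_prod_type, ← sum_add_distrib]
  refine sum_congr rfl fun e _ => ?_
  cases h : o e <;> simp [bsrc, btgt, otail, ohead, h, add_comm]

-- `(w p + 1) / 2 = ⌈w p / 2⌉`, as `ℤ`-division by `2` rounds down.
def halfSplit (w : E × Bool → ℤ) (o : E → Bool) (p : E × Bool) : ℤ :=
  if p.2 = o p.1 then (w p + 1) / 2 else w p / 2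

omit [Fintype E] [DecidableEq E] in
theorem halfSplit_nonneg_and_le (w : E × Bool → ℤ) (o : E → Bool) {p : E × Bool}
    (hp : 0 ≤ w p) : 0 ≤ halfSplit w o p ∧ halfSplit w o p ≤ w p := by
  unfold halfSplit; split_ifs <;> omega

omit [Fintype E] [DecidableEq E] in
theorem sub_halfSplit (w : E × Bool → ℤ) (o : E → Bool) (p : E × Bool) :
    w p - halfSplit w o p = halfSplit w (fun e => !o e) p := by
  obtain ⟨e, b⟩ := p
  unfold halfSplit
  cases b <;> cases h : o e <;> simp only [↓reduceIte, h, Bool.not_false, Bool.not_true, Bool.false_eq_true,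
    Bool.true_eq_false] <;> omega

omit [Fintype V] [DecidableEq E] in
theorem floor_div_le_sum_outArcs_halfSplit (s t : E → V) (o : E → Bool) (w : E × Bool → ℤ)
    (hw : ∀ p, 1 ≤ w p) {k : ℚ} (hk : 1 ≤ k) {τ : ℤ} (U : Finset V)
    (hτ : τ ≤ ∑ p ∈ outArcs (bsrc s t) (btgt s t) U, w p)
    (hbal : (#(outArcs (ohead s t o) (otail s t o) U) : ℚ)
      ≤ #(outArcs (otail s t o) (ohead s t o) U) * (k - 1)) :
    ⌊(τ : ℚ) / (k + 1)⌋ ≤ ∑ p ∈ outArcs (bsrc s t) (btgt s t) U, halfSplit w o p := by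
  set along := outArcs (otail s t o) (ohead s t o) U
  set against := outArcs (ohead s t o) (otail s t o) U
  set X := ∑ p ∈ outArcs (bsrc s t) (btgt s t) U, halfSplit w o p
  have hX : X = ∑ e ∈ along, (w (e, o e) + 1) / 2 + ∑ e ∈ against, w (e, !o e) / 2 := by
    simp [X, sum_outArcs_bidirected s t o, halfSplit, along, against]
  have hW := sum_outArcs_bidirected s t o w U
  have hcard : (#along : ℤ) ≤ X :=
    calc (#along : ℤ) = ∑ e ∈ along, 1 + 0 := by simp
      _ ≤ ∑ e ∈ along, (w (e, o e) + 1) / 2 + ∑ e ∈ against, w (e, !o e) / 2 :=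
          add_le_add (sum_le_sum fun e _ => by have := hw (e, o e); omega)
            (sum_nonneg fun e _ => by have := hw (e, !o e); omega)
      _ = X := hX.symm
  have htwice : ∑ p ∈ outArcs (bsrc s t) (btgt s t) U, w p - #against ≤ 2 * X :=
    calc ∑ p ∈ outArcs (bsrc s t) (btgt s t) U, w p - #against
        = ∑ e ∈ along, w (e, o e) + ∑ e ∈ against, (w (e, !o e) - 1) := by
          rw [hW, sum_sub_distrib, card_eq_sum_ones, Nat.cast_sum, Nat.cast_one]; abel
      _ ≤ ∑ e ∈ along, 2 * ((w (e, o e) + 1) / 2) + ∑ e ∈ against, 2 * (w (e, !o e) / 2) :=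
          add_le_add (sum_le_sum fun e _ => by omega) (sum_le_sum fun e _ => by omega)
      _ = 2 * X := by rw [hX, mul_add, mul_sum, mul_sum]
  have hcardq : (#along : ℚ) ≤ X := by exact_mod_cast hcard
  have htwiceq : (τ : ℚ) - #against ≤ 2 * X := by
    exact_mod_cast (show τ - #against ≤ 2 * X by linarith)
  have hmain : (τ : ℚ) / (k + 1) ≤ X := by
    rw [div_le_iff₀ (by linarith)]
    nlinarith [mul_le_mul_of_nonneg_left hcardq (sub_nonneg.2 hk)]
  simpa using Int.floor_le_floor hmain

/-- If `G` admits a nowhere-zero circular `k`-flow and `w` is a nowhere-zero `τ`-SCD of the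
bidirected graph, then `w` splits as `x + (w - x)` with both parts
`⌊τ/(k+1)⌋`-strongly-connected. -/
theorem decompose_nz_scd (s t : E → V) (k : ℚ) (hk : 2 ≤ k)
    (hflow : HasNZCircularFlow s t k) (τ : ℕ) (w : E × Bool → ℤ)
    (hw1 : ∀ p : E × Bool, 1 ≤ w p)
    (hw2 : ∀ U : Finset V, U.Nonempty → U ≠ univ →
      (τ : ℤ) ≤ ∑ p ∈ outArcs (bsrc s t) (btgt s t) U, w p) :
    ∃ x : E × Bool → ℤ, (∀ p, 0 ≤ x p ∧ x p ≤ w p) ∧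
      ∀ U : Finset V, U.Nonempty → U ≠ univ →
        ⌊(τ : ℚ) / (k + 1)⌋ ≤ ∑ p ∈ outArcs (bsrc s t) (btgt s t) U, x p ∧
        ⌊(τ : ℚ) / (k + 1)⌋ ≤ ∑ p ∈ outArcs (bsrc s t) (btgt s t) U, (w p - x p) := by
  obtain ⟨o, f, hcons, hf⟩ := hflow
  have hk1 : (1 : ℚ) ≤ k := by linarith
  refine ⟨halfSplit w o, fun p => halfSplit_nonneg_and_le w o (by linarith [hw1 p]),
    fun U hU hUuniv => ⟨?_, ?_⟩⟩
  · exact floor_div_le_sum_outArcs_halfSplit s t o w hw1 hk1 U (hw2 U hU hUuniv)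
      (card_outArcs_le_mul_card_outArcs_swap _ _ f _ (fun v => (hcons v).symm) hf U)
  · simp only [sub_halfSplit]
    refine floor_div_le_sum_outArcs_halfSplit s t _ w hw1 hk1 U (hw2 U hU hUuniv) ?_
    rw [otail_not, ohead_not]
    exact card_outArcs_le_mul_card_outArcs_swap _ _ f _ hcons hf U
end

section
/- There exists an undirected graph G (namely K₄) such that the all-ones vector on the bidirected arc set E⁺∪E⁻ is a nowhere-zero 3-SCD (w_e = 1 for all arcs and w(δ⁺(U)) ≥ 3 for all nonempty proper U⊆V), yet the arcs cannot be partitioned into 3 strongly connected spanning subdigraphs. -/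
open Finset

variable {V E : Type*} [Fintype V] [DecidableEq V] [Fintype E] [DecidableEq E]

/-- The edge type of the complete graph `K₄` on `Fin 4`. -/
def K4Edge : Type := {p : Fin 4 × Fin 4 // p.1 < p.2}

instance : Fintype K4Edge := by unfold K4Edge; infer_instance
instance : DecidableEq K4Edge := by unfold K4Edge; infer_instance

/-- First endpoint of an edge of `K₄`. -/
def k4s (e : K4Edge) : Fin 4 := e.1.1

/-- Second endpoint of an edge of `K₄`. -/
def k4t (e : K4Edge) : Fin 4 := e.1.2

set_option maxRecDepth 10000

def cycs : Fin 6 → Fin 4 → Fin 4 :=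
  ![![1,2,3,0], ![3,0,1,2], ![1,3,0,2], ![2,0,3,1], ![2,3,1,0], ![3,2,0,1]]

lemma lemA : ∀ n : Fin 4 → Fin 4, (∀ v, n v ≠ v) →
    (∀ U : Finset (Fin 4), U.Nonempty → U ≠ univ → ∃ v ∈ U, n v ∉ U) →
    ∃ k : Fin 6, n = cycs k := by decide

lemma lemB : ¬ ∃ a b c : Fin 6, ∀ v,
    cycs a v ≠ cycs b v ∧ cycs a v ≠ cycs c v ∧ cycs b v ≠ cycs c v := by decide

lemma lemC : ∀ v : Fin 4, (outArcs (bsrc k4s k4t) (btgt k4s k4t) {v}).card = 3 := by decide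

lemma lemD : ∀ p q : K4Edge × Bool, bsrc k4s k4t p = bsrc k4s k4t q →
    btgt k4s k4t p = btgt k4s k4t q → p = q := by decide


/-- In the bidirected `K₄`, the all-ones weight is a nowhere-zero `3`-SCD (every nonempty proper
cut has at least `3` leaving arcs), yet the arcs cannot be partitioned into `3` strongly
connected spanning subdigraphs. -/
theorem k4_all_ones_not_partitionable :
    (∀ U : Finset (Fin 4), U.Nonempty → U ≠ univ →
      3 ≤ (outArcs (bsrc k4s k4t) (btgt k4s k4t) U).card) ∧
    ¬ ∃ F : Fin 3 → Finset (K4Edge × Bool),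
        (∀ p : K4Edge × Bool, ∃! i, p ∈ F i) ∧
        ∀ i, ∀ U : Finset (Fin 4), U.Nonempty → U ≠ univ →
          (outArcs (bsrc k4s k4t) (btgt k4s k4t) U ∩ F i).Nonempty := by
  
  refine ⟨by decide, ?_⟩
  rintro ⟨F, hUniq, hCut⟩
  classical
  -- the color of an arc
  set f : K4Edge × Bool → Fin 3 := fun p => (hUniq p).choose with hf
  have hfmem : ∀ p, p ∈ F (f p) := fun p => (hUniq p).choose_spec.1
  have hfuniq : ∀ p i, p ∈ F i → f p = i := fun p i h =>
    ((hUniq p).choose_spec.2 i h).symm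
  -- out-arcs of a vertex
  set S : Fin 4 → Finset (K4Edge × Bool) :=
    fun v => outArcs (bsrc k4s k4t) (btgt k4s k4t) {v} with hS
  have hmemS : ∀ v p, p ∈ S v ↔ bsrc k4s k4t p = v ∧ btgt k4s k4t p ≠ v := by
    intro v p
    simp [hS, outArcs, Finset.mem_filter]
  -- each color appears among the out-arcs of each vertex
  have hex : ∀ i v, ∃ p, p ∈ S v ∧ f p = i := by
    intro i v
    obtain ⟨p, hp⟩ := hCut i {v} (singleton_nonempty v) (by
      intro h
      have : (univ : Finset (Fin 4)).card = ({v} : Finset (Fin 4)).card := by rw [h]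
      simp at this)
    rw [Finset.mem_inter] at hp
    exact ⟨p, hp.1, hfuniq p i hp.2⟩
  -- f is injective on the out-arcs of each vertex
  have hinj : ∀ v, ∀ p q, p ∈ S v → q ∈ S v → f p = f q → p = q := by
    intro v
    have hcard : Fintype.card {p // p ∈ S v} = Fintype.card (Fin 3) := by
      rw [Fintype.card_coe, lemC v]; rfl
    have hsurj : Function.Surjective (fun p : {p // p ∈ S v} => f p.1) := by
      intro i
      obtain ⟨p, hp, hfp⟩ := hex i v
      exact ⟨⟨p, hp⟩, hfp⟩
    have hbij := (Fintype.bijective_iff_surjective_and_card _).2 ⟨hsurj, hcard⟩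
    intro p q hp hq hpq
    have := hbij.1 (a₁ := ⟨p, hp⟩) (a₂ := ⟨q, hq⟩) hpq
    exact congrArg Subtype.val this
  choose P hP1 hP2 using hex
  set n : Fin 3 → Fin 4 → Fin 4 := fun i v => btgt k4s k4t (P i v) with hn
  have hPsrc : ∀ i v, bsrc k4s k4t (P i v) = v := fun i v => ((hmemS v _).1 (hP1 i v)).1
  have hne : ∀ i v, n i v ≠ v := fun i v => ((hmemS v _).1 (hP1 i v)).2
  -- cut property
  have hcutn : ∀ i (U : Finset (Fin 4)), U.Nonempty → U ≠ univ → ∃ v ∈ U, n i v ∉ U := by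
    intro i U hU1 hU2
    obtain ⟨p, hp⟩ := hCut i U hU1 hU2
    rw [Finset.mem_inter] at hp
    have hpo : bsrc k4s k4t p ∈ U ∧ btgt k4s k4t p ∉ U := by
      have := hp.1; simpa [outArcs, Finset.mem_filter] using this
    refine ⟨bsrc k4s k4t p, hpo.1, ?_⟩
    have hpS : p ∈ S (bsrc k4s k4t p) := (hmemS _ p).2 ⟨rfl, fun h => hpo.2 (h ▸ hpo.1)⟩
    have : P i (bsrc k4s k4t p) = p :=
      hinj _ _ _ (hP1 i _) hpS (by rw [hP2 i _, hfuniq p i hp.2])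
    rw [hn]; simp only; rw [this]; exact hpo.2
  -- distinctness
  have hdist : ∀ i j v, i ≠ j → n i v ≠ n j v := by
    intro i j v hij h
    have := lemD (P i v) (P j v) (by rw [hPsrc, hPsrc]) h
    exact hij (by rw [← hP2 i v, ← hP2 j v, this])
  obtain ⟨a, ha⟩ := lemA (n 0) (hne 0) (hcutn 0)
  obtain ⟨b, hb⟩ := lemA (n 1) (hne 1) (hcutn 1)
  obtain ⟨c, hc⟩ := lemA (n 2) (hne 2) (hcutn 2)
  exact lemB ⟨a, b, c, fun v => ⟨ha ▸ hb ▸ hdist 0 1 v (by decide),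
    ha ▸ hc ▸ hdist 0 2 v (by decide), hb ▸ hc ▸ hdist 1 2 v (by decide)⟩⟩
end
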